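/- arXiv:2404.01545 — 2 statements merged into one kernel-verified Lean document; each statement's English description precedes it below -/
import Mathlib

section
/- The burning number of the cycle C_n on n vertices equals ⌈√n⌉. -/
open SimpleGraph
open scoped Classical

/-!
A ball of radius `r` in `C_n` has at most `2r + 1` vertices, so `k` fire sources burn at
most `∑_{r<k} (2r + 1) = k²` vertices, whence `b(C_n) ≥ ⌈√n⌉`. Conversely, the source `r² + r`
with radius `r` burns the arc `[r², r² + 2r]`, and these arcs tile `[0, k²)`.
-/

/-- Burning number: least `k` such that there are fire sources `v₀,…,v_{k-1}` with
`⋃_{r=0}^{k-1} B_r(v_r) = V`. -/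
noncomputable def burningNumber (V : Type*) [Fintype V] (G : SimpleGraph V) : ℕ :=
  sInf {k | ∃ v : Fin k → V, ∀ u : V, ∃ r : Fin k, G.dist (v r) u ≤ (r : ℕ)}

/-- Covering number `b̂`: least `k` such that `k` balls of radius `k` cover `V`. -/
noncomputable def coverNumber (V : Type*) [Fintype V] (G : SimpleGraph V) : ℕ :=
  sInf {k | ∃ v : Fin k → V, ∀ u : V, ∃ i : Fin k, G.dist (v i) u ≤ k}

open Finset

def IsBurningSequence {V : Type*} (G : SimpleGraph V) {k : ℕ} (v : Fin k → V) : Prop :=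
  ∀ u, ∃ r : Fin k, G.dist (v r) u ≤ r

theorem sum_range_two_mul_add_one (k : ℕ) : ∑ i ∈ range k, (2 * i + 1) = k ^ 2 := by
  induction k with
  | zero => simp
  | succ k ih => rw [sum_range_succ, ih]; ring

section Burning

variable {V : Type*} [Fintype V] {G : SimpleGraph V} {k : ℕ} {v : Fin k → V}

theorem IsBurningSequence.card_le_sum_card_ball (hv : IsBurningSequence G v) :
    Fintype.card V ≤ ∑ r : Fin k, #{u | G.dist (v r) u ≤ r} := by
  calc Fintype.card V = #(univ : Finset V) := card_univ.symm
    _ ≤ #(univ.biUnion fun r : Fin k => ({u | G.dist (v r) u ≤ r} : Finset V)) :=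
        card_le_card fun u _ => by simpa using hv u
    _ ≤ _ := card_biUnion_le

theorem IsBurningSequence.card_le_sq (hball : ∀ c r, #{u | G.dist c u ≤ r} ≤ 2 * r + 1)
    (hv : IsBurningSequence G v) : Fintype.card V ≤ k ^ 2 :=
  calc Fintype.card V ≤ ∑ r : Fin k, #{u | G.dist (v r) u ≤ r} := hv.card_le_sum_card_ball
    _ ≤ ∑ r : Fin k, (2 * (r : ℕ) + 1) := sum_le_sum fun r _ => hball (v r) r
    _ = k ^ 2 := by rw [Fin.sum_univ_eq_sum_range (fun r => 2 * r + 1), sum_range_two_mul_add_one]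

end Burning

section Cycle

open Fin.CommRing

variable {n : ℕ} [NeZero n]

theorem cycleGraph_dist_add_one_le (u : Fin n) : (cycleGraph n).dist u (u + 1) ≤ 1 := by
  rcases Nat.lt_or_ge n 2 with hn | hn
  · have : Subsingleton (Fin n) := Fin.subsingleton_iff_le_one.mpr (by omega)
    simp [Subsingleton.elim (u + 1) u]
  · refine (dist_eq_one_iff_adj.mpr (cycleGraph_adj'.mpr (Or.inr ?_))).le
    simp [Nat.mod_eq_of_lt hn]

theorem cycleGraph_dist_add_natCast_le (u : Fin n) (m : ℕ) :
    (cycleGraph n).dist u (u + (m : Fin n)) ≤ m := by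
  induction m with
  | zero => simp
  | succ m ih =>
    have step := cycleGraph_dist_add_one_le (u + (m : Fin n))
    have tri :=
      (cycleGraph_preconnected u (u + (m : Fin n))).dist_triangle_left (u + (m : Fin n) + 1)
    push_cast
    rw [← add_assoc]
    omega

theorem cycleGraph_dist_natCast_le (a b : ℕ) :
    (cycleGraph n).dist (a : Fin n) (b : Fin n) ≤ a.dist b := by
  rcases le_total a b with h | h
  · obtain ⟨m, rfl⟩ := Nat.exists_eq_add_of_le h
    simpa [Nat.dist_eq_sub_of_le h] using cycleGraph_dist_add_natCast_le (a : Fin n) m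
  · obtain ⟨m, rfl⟩ := Nat.exists_eq_add_of_le h
    rw [dist_comm, Nat.dist_comm]
    simpa [Nat.dist_eq_sub_of_le h] using cycleGraph_dist_add_natCast_le (b : Fin n) m

theorem cycleGraph_eq_add_one_of_adj {u w : Fin n} (h : (cycleGraph n).Adj u w) :
    w = u + 1 ∨ u = w + 1 := by
  have eq_one {a : Fin n} (ha : a.val = 1) : a = 1 :=
    Fin.ext (by rw [ha, Fin.val_one', Nat.mod_eq_of_lt (by omega)])
  rcases cycleGraph_adj'.mp h with h | h
  · exact Or.inr (sub_eq_iff_eq_add'.mp (eq_one h))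
  · exact Or.inl (sub_eq_iff_eq_add'.mp (eq_one h))

theorem cycleGraph_exists_abs_le_length_of_walk {u v : Fin n} (p : (cycleGraph n).Walk u v) :
    ∃ i : ℤ, |i| ≤ p.length ∧ v = u + i := by
  induction p with
  | nil => exact ⟨0, by simp⟩
  | @cons u w v h q ih =>
    obtain ⟨i, hi, rfl⟩ := ih
    rw [Walk.length_cons]
    rcases cycleGraph_eq_add_one_of_adj h with rfl | rfl
    · refine ⟨i + 1, ?_, by push_cast; ring⟩
      push_cast
      exact (abs_add_le _ _).trans (by simpa using hi)
    · refine ⟨i - 1, ?_, by push_cast; ring⟩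
      push_cast
      exact (abs_sub _ _).trans (by simpa using hi)

theorem cycleGraph_card_ball_le (c : Fin n) (r : ℕ) :
    #{u | (cycleGraph n).dist c u ≤ r} ≤ 2 * r + 1 := by
  have hsub : ({u | (cycleGraph n).dist c u ≤ r} : Finset (Fin n)) ⊆
      (Icc (-(r : ℤ)) r).image fun i : ℤ => c + (i : Fin n) := by
    intro u hu
    obtain ⟨p, hp⟩ := (cycleGraph_preconnected c u).exists_walk_length_eq_dist
    obtain ⟨i, hi, rfl⟩ := cycleGraph_exists_abs_le_length_of_walk p
    have : |i| ≤ r := hi.trans (by rw [hp]; exact_mod_cast (mem_filter.mp hu).2)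
    exact mem_image.mpr ⟨i, mem_Icc.mpr (abs_le.mp this), rfl⟩
  calc _ ≤ #((Icc (-(r : ℤ)) r).image fun i : ℤ => c + (i : Fin n)) := card_le_card hsub
    _ ≤ #(Icc (-(r : ℤ)) r) := card_image_le
    _ = 2 * r + 1 := by rw [Int.card_Icc]; omega

theorem cycleGraph_isBurningSequence (hk : n ≤ k ^ 2) :
    IsBurningSequence (cycleGraph n) fun r : Fin k => (((r : ℕ) ^ 2 + r : ℕ) : Fin n) := by
  intro u
  set s := Nat.sqrt (u : ℕ)
  have hs : s < k := Nat.sqrt_lt'.mpr (u.isLt.trans_le hk)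
  have hlo : s ^ 2 ≤ (u : ℕ) := Nat.sqrt_le' u
  have hhi : (u : ℕ) < (s + 1) ^ 2 := Nat.lt_succ_sqrt' u
  refine ⟨⟨s, hs⟩, ?_⟩
  have : (s + 1) ^ 2 = s ^ 2 + 2 * s + 1 := by ring
  calc _ = (cycleGraph n).dist _ ((u : ℕ) : Fin n) := by rw [Fin.cast_val_eq_self]
    _ ≤ (s ^ 2 + s).dist u := cycleGraph_dist_natCast_le _ _
    _ ≤ s := by simp only [Nat.dist]; omega

theorem exists_isBurningSequence_cycleGraph_iff {k : ℕ} :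
    (∃ v : Fin k → Fin n, IsBurningSequence (cycleGraph n) v) ↔ n ≤ k ^ 2 :=
  ⟨fun ⟨_, hv⟩ => Fintype.card_fin n ▸ hv.card_le_sq cycleGraph_card_ball_le,
    fun hk => ⟨_, cycleGraph_isBurningSequence hk⟩⟩

end Cycle

theorem Nat.ceil_sqrt_le_iff (n k : ℕ) : ⌈√(n : ℝ)⌉₊ ≤ k ↔ n ≤ k ^ 2 := by
  rw [Nat.ceil_le, Real.sqrt_le_left (by positivity)]
  exact_mod_cast Iff.rfl

theorem burning_cycle_general (n : ℕ) :
    burningNumber (Fin n) (SimpleGraph.cycleGraph n) = ⌈Real.sqrt n⌉₊ := by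
  rcases Nat.eq_zero_or_pos n with rfl | hn
  · simp only [CharP.cast_eq_zero, Real.sqrt_zero, Nat.ceil_zero]
    exact Nat.sInf_eq_zero.mpr (.inl ⟨Fin.elim0, fun u => u.elim0⟩)
  have : NeZero n := ⟨hn.ne'⟩
  have hS : {k | ∃ v : Fin k → Fin n, IsBurningSequence (cycleGraph n) v} =
      Set.Ici ⌈√(n : ℝ)⌉₊ := by
    ext k
    simp only [Set.mem_ofPred_eq, Set.mem_Ici, exists_isBurningSequence_cycleGraph_iff,
      Nat.ceil_sqrt_le_iff]
  exact (congrArg sInf hS).trans csInf_Ici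

theorem burning_cycle (n : ℕ) (hn : 3 ≤ n) :
    burningNumber (Fin n) (SimpleGraph.cycleGraph n) = ⌈Real.sqrt n⌉₊ :=
  burning_cycle_general n
end

section
/- Applying the pair-counting lower bound to the path: since Q_{2k}(P_n) ≤ 2kn, if 2kn < n²/(2k) − n/2 (e.g., k < √(n)/2 − 1 for large n), then b(P_n) ≥ b̂(P_n) ≥ k+1; in particular b(P_n) = Ω(√n). -/
open SimpleGraph
open scoped Classical

/-! A cover of `V` by `m` balls of radius `r` splits `V` into `m` classes of diameter at most
`2r`, so by Cauchy–Schwarz at least `|V|² / m` ordered pairs lie at distance at most `2r`. On the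
path at most `2kn` pairs `i < j` lie within distance `2k`, so a cover by `k` balls of radius `k`
would force `n² ≤ k (4kn + n)`, contradicting the hypothesis. Burning sources with radii
`0, …, b - 1` give `b` balls of radius `b`, whence `b̂ ≤ b`. -/

open Finset Fintype

section PairCounting

variable {α β : Type*} [Fintype α] [Fintype β] [DecidableEq β]

lemma card_pairs_apply_eq_eq_sum_sq (f : α → β) :
    #{p : α × α | f p.1 = f p.2} = ∑ b, #{a | f a = b} ^ 2 := by
  rw [card_eq_sum_card_fiberwise (f := fun p => f p.1) (t := univ) fun _ _ => mem_univ _]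
  refine sum_congr rfl fun b _ => ?_
  rw [sq, ← card_product]
  congr 1
  ext ⟨x, y⟩
  simp only [mem_filter, mem_univ, true_and, mem_product]
  grind

lemma sq_card_le_card_mul_card_pairs_apply_eq (f : α → β) :
    card α ^ 2 ≤ card β * #{p : α × α | f p.1 = f p.2} := by
  have hsum : ∑ b, #{a | f a = b} = card α :=
    (card_eq_sum_card_fiberwise fun _ _ => mem_univ _).symm
  have := sq_sum_le_card_mul_sum_sq (s := univ) (f := fun b => #{a | f a = b})
  rwa [hsum, card_univ, ← card_pairs_apply_eq_eq_sum_sq] at this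

end PairCounting

lemma card_filter_le_two_mul_card_filter_lt_add_card {α : Type*} [Fintype α] [LinearOrder α]
    (r : α → α → Prop) [DecidableRel r] (hr : ∀ a b, r a b → r b a) :
    #{p : α × α | r p.1 p.2} ≤ 2 * #{p : α × α | p.1 < p.2 ∧ r p.1 p.2} + card α := by
  set S := ({p : α × α | p.1 < p.2 ∧ r p.1 p.2} : Finset _)
  have hsub : ({p : α × α | r p.1 p.2} : Finset _) ⊆
      S ∪ S.image Prod.swap ∪ univ.image fun a => (a, a) := by
    rintro ⟨a, b⟩ hab
    simp only [mem_filter, mem_univ, true_and] at hab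
    rcases lt_trichotomy a b with h | rfl | h
    · simp [S, h, hab]
    · simp
    · simp [S, h, hr _ _ hab]
  calc _ ≤ #(S ∪ S.image Prod.swap ∪ univ.image fun a => (a, a)) := card_le_card hsub
    _ ≤ #S + #S + card α := by
      grw [card_union_le, card_union_le, card_image_le, card_image_le, card_univ]
    _ = 2 * #S + card α := by ring

theorem SimpleGraph.Preconnected.sq_card_le_mul_card_dist_le {V : Type*} [Fintype V]
    {G : SimpleGraph V} (hG : G.Preconnected) {m r : ℕ} (v : Fin m → V)
    (hv : ∀ u, ∃ i, G.dist (v i) u ≤ r) :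
    card V ^ 2 ≤ m * #{p : V × V | G.dist p.1 p.2 ≤ 2 * r} := by
  choose c hc using hv
  calc card V ^ 2 ≤ card (Fin m) * #{p : V × V | c p.1 = c p.2} :=
        sq_card_le_card_mul_card_pairs_apply_eq c
    _ ≤ m * #{p : V × V | G.dist p.1 p.2 ≤ 2 * r} := by
      rw [Fintype.card_fin]
      gcongr with p
      intro hp
      have h₁ := hc p.1
      have h₂ := hc p.2
      rw [hp, dist_comm] at h₁
      have := (hG p.1 (v (c p.2))).dist_triangle_left p.2
      omega

lemma pathGraph_val_le_val_add_length {n : ℕ} {i j : Fin n} (w : (pathGraph n).Walk i j) :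
    (j : ℕ) ≤ i + w.length := by
  induction w with
  | nil => simp
  | cons h w ih =>
    rw [pathGraph_adj] at h
    simp only [Walk.length_cons]
    omega

lemma pathGraph_val_le_val_add_dist {n : ℕ} (i j : Fin n) :
    (j : ℕ) ≤ i + (pathGraph n).dist i j := by
  obtain ⟨w, hw⟩ := (pathGraph_preconnected n i j).exists_walk_length_eq_dist
  exact hw ▸ pathGraph_val_le_val_add_length w

lemma card_pathGraph_pairs_lt_dist_le_le (n d : ℕ) :
    #{p : Fin n × Fin n | p.1 < p.2 ∧ (pathGraph n).dist p.1 p.2 ≤ d} ≤ d * n := by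
  have hinj := card_le_card_of_injOn (fun p : Fin n × Fin n => ((p.2 : ℕ) - p.1 - 1, p.1))
    (s := {p : Fin n × Fin n | p.1 < p.2 ∧ (pathGraph n).dist p.1 p.2 ≤ d})
    (t := range d ×ˢ univ) ?_ ?_
  · simpa using hinj
  · rintro ⟨i, j⟩ hij
    simp only [coe_filter, Set.mem_ofPred_eq, mem_univ, true_and] at hij
    have := pathGraph_val_le_val_add_dist i j
    simp only [coe_product, coe_range, Set.mem_prod, Set.mem_Iio, coe_univ, Set.mem_univ, and_true]
    have := Fin.lt_def.mp hij.1
    omega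
  · rintro ⟨i, j⟩ hij ⟨i', j'⟩ hij' h
    simp only [coe_filter, Set.mem_ofPred_eq, mem_univ, true_and, Prod.mk.injEq] at hij hij' h
    have := Fin.lt_def.mp hij.1
    have := Fin.lt_def.mp hij'.1
    obtain ⟨hd, rfl⟩ := h
    simp only [Prod.mk.injEq, true_and]
    omega

section CoverNumber

variable (V : Type*) [Fintype V] (G : SimpleGraph V)

lemma exists_cover_coverNumber :
    ∃ v : Fin (coverNumber V G) → V, ∀ u, ∃ i, G.dist (v i) u ≤ coverNumber V G :=
  Nat.sInf_mem (s := {k | ∃ v : Fin k → V, ∀ u, ∃ i : Fin k, G.dist (v i) u ≤ k})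
    ⟨card V, (equivFin V).symm, fun u => ⟨equivFin V u, by simp⟩⟩

lemma coverNumber_le_burningNumber : coverNumber V G ≤ burningNumber V G := by
  obtain ⟨v, hv⟩ := Nat.sInf_mem
    (s := {k | ∃ v : Fin k → V, ∀ u, ∃ r : Fin k, G.dist (v r) u ≤ (r : ℕ)})
    ⟨card V, (equivFin V).symm, fun u => ⟨equivFin V u, by simp⟩⟩
  refine Nat.sInf_le ⟨v, fun u => ?_⟩
  obtain ⟨r, hr⟩ := hv u
  exact ⟨r, hr.trans r.isLt.le⟩

end CoverNumber

theorem path_pair_count_lower_bound_general (n k : ℕ) (hk : 1 ≤ k)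
    (h : (2 * k * n : ℝ) < (n : ℝ) ^ 2 / (2 * k) - n / 2) :
    ((Finset.univ.filter (fun p : Fin n × Fin n =>
        p.1 < p.2 ∧ (SimpleGraph.pathGraph n).dist p.1 p.2 ≤ 2 * k)).card : ℝ)
        ≤ 2 * k * n ∧
      k + 1 ≤ coverNumber (Fin n) (SimpleGraph.pathGraph n) ∧
      coverNumber (Fin n) (SimpleGraph.pathGraph n) ≤
        burningNumber (Fin n) (SimpleGraph.pathGraph n) := by
  have hQ := card_pathGraph_pairs_lt_dist_le_le n (2 * k)
  refine ⟨by exact_mod_cast hQ, ?_, coverNumber_le_burningNumber _ _⟩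
  by_contra! hb
  obtain ⟨v, hv⟩ := exists_cover_coverNumber (Fin n) (pathGraph n)
  have hcover := (pathGraph_preconnected n).sq_card_le_mul_card_dist_le (r := k) v
    fun u => (hv u).imp fun _ hi => hi.trans (by omega)
  have hsymm := card_filter_le_two_mul_card_filter_lt_add_card
    (fun i j : Fin n => (pathGraph n).dist i j ≤ 2 * k) fun _ _ => dist_comm.trans_le
  rw [Fintype.card_fin] at hcover hsymm
  have hcount : n ^ 2 ≤ k * (2 * (2 * k * n) + n) :=
    hcover.trans (Nat.mul_le_mul (by omega) (by omega))
  rw [lt_sub_iff_add_lt, lt_div_iff₀ (by positivity)] at h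
  have : (n : ℝ) ^ 2 ≤ k * (2 * (2 * k * n) + n) := by exact_mod_cast hcount
  linarith

theorem path_pair_count_lower_bound (n k : ℕ) (hn : 1 ≤ n) (hk : 1 ≤ k)
    (h : (2 * k * n : ℝ) < (n : ℝ) ^ 2 / (2 * k) - n / 2) :
    ((Finset.univ.filter (fun p : Fin n × Fin n =>
        p.1 < p.2 ∧ (SimpleGraph.pathGraph n).dist p.1 p.2 ≤ 2 * k)).card : ℝ)
        ≤ 2 * k * n ∧
      k + 1 ≤ coverNumber (Fin n) (SimpleGraph.pathGraph n) ∧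
      coverNumber (Fin n) (SimpleGraph.pathGraph n) ≤
        burningNumber (Fin n) (SimpleGraph.pathGraph n) :=
  path_pair_count_lower_bound_general n k hk h
end
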